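/- arXiv:2203.10130 — 4 statements merged into one kernel-verified Lean document; each statement's English description precedes it below -/
import Mathlib

section
/- The EzGP covariance matrix is positive semi-definite: given inputs w_i = (x_i, z_i) for i = 1,...,n with x_i ∈ R^p and z_i ∈ ∏_h {1,...,m_h}, positive variance parameters σ_0^2, σ_1^2, ..., σ_q^2, and positive correlation parameters θ_k^{(0)} and θ_{k,l}^{(h)}, the n×n matrix Φ with Φ_{ij} = σ_0^2 exp(-Σ_k θ_k^{(0)}(x_{ik}-x_{jk})^2) + Σ_{h=1}^q Σ_{l=1}^{m_h} 1[z_{ih}=z_{jh}=l] σ_h^2 exp(-Σ_k θ_{k,l}^{(h)}(x_{ik}-x_{jk})^2) is positive semi-definite. -/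
/-! The Gaussian correlation `exp (-∑ θₖ (xₖ - yₖ)²)` factors as `e(x) · exp (∑ 2θₖ xₖ yₖ) · e(y)`,
so its matrix is a diagonal congruence of the entrywise exponential of a weighted Gram matrix.
That exponential is positive semidefinite: its Taylor series is a sum of nonnegative multiples of
Hadamard powers of a positive semidefinite matrix (Schur product theorem), and the positive
semidefinite cone is closed. Each qualitative term is the Hadamard product of such a matrix with
the rank-one matrix `u uᵀ`, `u = 1[z_h = l]`, and the EzGP matrix is a nonnegative combination of
these. -/

open scoped ComplexOrder

namespace Matrix

variable {n 𝕜 : Type*} [Fintype n] [RCLike 𝕜]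

theorem isClosed_setOf_posSemidef : IsClosed {M : Matrix n n 𝕜 | M.PosSemidef} := by
  simp only [posSemidef_iff_dotProduct_mulVec, Set.ofPred_and, Set.ofPred_forall]
  refine (isClosed_eq (by fun_prop) continuous_id).inter (isClosed_iInter fun v => ?_)
  exact isClosed_le continuous_const (by fun_prop)

theorem PosSemidef.of_hasSum {ι : Type*} {A : ι → Matrix n n 𝕜} {M : Matrix n n 𝕜}
    (hA : ∀ i, (A i).PosSemidef) (hM : HasSum A M) : M.PosSemidef :=
  isClosed_setOf_posSemidef.mem_of_tendsto hM
    (Filter.Eventually.of_forall fun s => posSemidef_sum s fun i _ => hA i)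

theorem PosSemidef.map_pow {A : Matrix n n 𝕜} (hA : A.PosSemidef) (N : ℕ) :
    (A.map (· ^ N)).PosSemidef := by
  induction N with
  | zero =>
    convert posSemidef_vecMulVec_self_star (1 : n → 𝕜) using 1
    ext i j
    simp [vecMulVec]
  | succ N ih =>
    convert ih.hadamard hA using 1
    ext i j
    simp [pow_succ]

theorem PosSemidef.map_exp {A : Matrix n n ℝ} (hA : A.PosSemidef) :
    (A.map Real.exp).PosSemidef := by
  refine PosSemidef.of_hasSum (fun N => (hA.map_pow N).smul (a := (N.factorial : ℝ)⁻¹) ?_) ?_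
  · positivity
  refine Pi.hasSum.2 fun i => Pi.hasSum.2 fun j => ?_
  simpa [Real.exp_eq_exp_ℝ, div_eq_inv_mul] using NormedSpace.expSeries_div_hasSum_exp (A i j)

end Matrix

open Matrix

noncomputable def gaussianKernel {ι : Type*} [Fintype ι] (θ : ι → ℝ) (x y : ι → ℝ) : ℝ :=
  Real.exp (-∑ k, θ k * (x k - y k) ^ 2)

theorem gaussianKernel_eq_exp_mul_exp_mul_exp {ι : Type*} [Fintype ι] (θ : ι → ℝ) (x y : ι → ℝ) :
    gaussianKernel θ x y = Real.exp (-∑ k, θ k * x k ^ 2) *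
      Real.exp (∑ k, x k * (2 * θ k) * y k) * Real.exp (-∑ k, θ k * y k ^ 2) := by
  rw [gaussianKernel, ← Real.exp_add, ← Real.exp_add]
  congr 1
  simp only [← Finset.sum_neg_distrib, ← Finset.sum_add_distrib]
  exact Finset.sum_congr rfl fun k _ => by ring

theorem posSemidef_gaussianKernel {n ι : Type*} [Fintype n] [Fintype ι] {θ : ι → ℝ}
    (hθ : ∀ k, 0 ≤ θ k) (x : n → ι → ℝ) :
    (of fun i j => gaussianKernel θ (x i) (x j)).PosSemidef := by
  classical
  let e : n → ℝ := fun i => Real.exp (-∑ k, θ k * x i k ^ 2)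
  have hGram : (of x * diagonal (fun k => 2 * θ k) * (of x)ᴴ).PosSemidef :=
    (PosSemidef.diagonal fun k => mul_nonneg zero_le_two (hθ k)).mul_mul_conjTranspose_same _
  convert (hGram.map_exp).conjTranspose_mul_mul_same (diagonal e) using 1
  ext i j
  rw [diagonal_conjTranspose, star_trivial, mul_diagonal, diagonal_mul, map_apply, mul_apply]
  simp only [of_apply, gaussianKernel_eq_exp_mul_exp_mul_exp, mul_diagonal, conjTranspose_apply,
    star_trivial, e]

noncomputable def ezgpCov {p q : ℕ} {m : Fin q → ℕ}
    (σ0sq : ℝ) (σsq : Fin q → ℝ) (θ0 : Fin p → ℝ)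
    (θ : (h : Fin q) → Fin p → Fin (m h) → ℝ)
    (x1 x2 : Fin p → ℝ) (z1 z2 : (h : Fin q) → Fin (m h)) : ℝ :=
  σ0sq * Real.exp (-∑ k, θ0 k * (x1 k - x2 k) ^ 2) +
    ∑ h, ∑ l, (if z1 h = l ∧ z2 h = l then (1 : ℝ) else 0) *
      (σsq h * Real.exp (-∑ k, θ h k l * (x1 k - x2 k) ^ 2))

theorem ezgpCov_eq_sum_gaussianKernel {p q : ℕ} {m : Fin q → ℕ} (σ0sq : ℝ) (σsq : Fin q → ℝ)
    (θ0 : Fin p → ℝ) (θ : (h : Fin q) → Fin p → Fin (m h) → ℝ) (x1 x2 : Fin p → ℝ)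
    (z1 z2 : (h : Fin q) → Fin (m h)) :
    ezgpCov σ0sq σsq θ0 θ x1 x2 z1 z2 = σ0sq * gaussianKernel θ0 x1 x2 +
      ∑ h, ∑ l, (if z1 h = l then 1 else 0) * (if z2 h = l then 1 else 0) *
        (σsq h * gaussianKernel (fun k => θ h k l) x1 x2) := by
  simp only [ezgpCov, gaussianKernel, ite_zero_mul_ite_zero, one_mul]

theorem ezgp_cov_posSemidef {n p q : ℕ} {m : Fin q → ℕ}
    (x : Fin n → Fin p → ℝ) (z : Fin n → (h : Fin q) → Fin (m h))
    (σ0sq : ℝ) (σsq : Fin q → ℝ) (θ0 : Fin p → ℝ)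
    (θ : (h : Fin q) → Fin p → Fin (m h) → ℝ)
    (hσ0 : 0 < σ0sq) (hσ : ∀ h, 0 < σsq h)
    (hθ0 : ∀ k, 0 < θ0 k) (hθ : ∀ h k l, 0 < θ h k l) :
    (Matrix.of fun i j : Fin n =>
      ezgpCov σ0sq σsq θ0 θ (x i) (x j) (z i) (z j)).PosSemidef := by
  let G (θ' : Fin p → ℝ) : Matrix (Fin n) (Fin n) ℝ := of fun i j => gaussianKernel θ' (x i) (x j)
  let level (h : Fin q) (l : Fin (m h)) : Fin n → ℝ := fun i => if z i h = l then 1 else 0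
  have hG (θ' : Fin p → ℝ) (hθ' : ∀ k, 0 < θ' k) : (G θ').PosSemidef :=
    posSemidef_gaussianKernel (fun k => (hθ' k).le) x
  have hsplit : (of fun i j => ezgpCov σ0sq σsq θ0 θ (x i) (x j) (z i) (z j)) =
      σ0sq • G θ0 + ∑ h, ∑ l, vecMulVec (level h l) (star (level h l)) ⊙ (σsq h • G (θ h · l)) := by
    ext i j
    simp [ezgpCov_eq_sum_gaussianKernel, G, level, vecMulVec_apply, Matrix.sum_apply]
  rw [hsplit]
  exact ((hG θ0 hθ0).smul hσ0.le).add <| posSemidef_sum _ fun h _ => posSemidef_sum _ fun l _ =>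
    (posSemidef_vecMulVec_self_star _).hadamard ((hG _ (hθ h · l)).smul (hσ h).le)
end

section
/- If points x_1,...,x_n ∈ R^p are pairwise distinct and θ_1,...,θ_p > 0, then the Gaussian kernel matrix with entries exp(-Σ_{k=1}^p θ_k (x_{ik}-x_{jk})^2) is positive definite. -/
/-!
Since `θ(xᵢ - xⱼ)² = θxᵢ² + θxⱼ² - 2θxᵢxⱼ` coordinatewise, the Gaussian kernel matrix is the
congruence of `exp (∑ₖ 2θₖ xᵢₖ xⱼₖ)` by a positive diagonal matrix. Expanding `exp` in its power
series, the quadratic form of the latter at `d` is `∑ₘ (1/m!) ∑_α (∏ₜ 2θ_{αₜ}) (∑ᵢ dᵢ ∏ₜ xᵢ_{αₜ})²`,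
a positive combination of squared moments of `d` against the monomials. If all these moments
vanish, `d` annihilates every polynomial; evaluating at `∏_{j ≠ i₀} (X_{kⱼ} - xⱼ_{kⱼ})`, where `kⱼ`
is a coordinate in which `xⱼ` differs from `x_{i₀}`, gives `d_{i₀} = 0`.
-/

open Finset Real Matrix

section Separation

variable {R ι κ : Type*} [CommRing R] [Fintype ι] {x : ι → κ → R} {d : ι → R}

theorem sum_mul_prod_sub_eq_zero_of_forall_sum_mul_prod_eq_zero
    (H : ∀ (m : ℕ) (α : Fin m → κ), ∑ i, d i * ∏ t, x i (α t) = 0)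
    {J : Type*} (k : J → κ) (c : J → R) (T : Finset J) :
    ∑ i, d i * ∏ j ∈ T, (x i (k j) - c j) = 0 := by
  classical
  -- Allowing a monomial prefactor makes the induction on `T` go through: one more linear factor
  -- `X_{k j} - c j` splits into a longer monomial and a multiple of the old one.
  suffices ∀ (m : ℕ) (α : Fin m → κ),
      ∑ i, d i * (∏ t, x i (α t)) * ∏ j ∈ T, (x i (k j) - c j) = 0 by
    simpa using this 0 Fin.elim0
  induction T using Finset.induction_on with
  | empty => simpa using H
  | insert j T hj ih =>
    intro m α
    have hcons := ih (m + 1) (Fin.cons (k j) α)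
    simp only [Fin.prod_univ_succ, Fin.cons_zero, Fin.cons_succ] at hcons
    calc ∑ i, d i * (∏ t, x i (α t)) * ∏ l ∈ insert j T, (x i (k l) - c l)
        = ∑ i, d i * (x i (k j) * ∏ t, x i (α t)) * ∏ l ∈ T, (x i (k l) - c l)
          - c j * ∑ i, d i * (∏ t, x i (α t)) * ∏ l ∈ T, (x i (k l) - c l) := by
          rw [mul_sum, ← sum_sub_distrib]
          refine sum_congr rfl fun i _ => ?_
          rw [prod_insert hj]
          ring
      _ = 0 := by rw [hcons, ih m α, mul_zero, sub_zero]

theorem eq_zero_of_forall_sum_mul_prod_eq_zero [IsDomain R] (hx : Function.Injective x)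
    (H : ∀ (m : ℕ) (α : Fin m → κ), ∑ i, d i * ∏ t, x i (α t) = 0) : d = 0 := by
  classical
  funext i₀
  choose k hk using fun j : {j // j ≠ i₀} => Function.ne_iff.mp (hx.ne j.2.symm)
  have hsum := sum_mul_prod_sub_eq_zero_of_forall_sum_mul_prod_eq_zero H k
    (fun j => x j (k j)) univ
  rw [sum_eq_single i₀ (fun i _ hi => by rw [prod_eq_zero (mem_univ ⟨i, hi⟩) (sub_self _),
    mul_zero]) (by simp)] at hsum
  exact (mul_eq_zero.mp hsum).resolve_right
    (prod_ne_zero_iff.mpr fun j _ => sub_ne_zero.mpr (hk j))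

end Separation

theorem sum_sum_mul_mul_weightedInner_pow_eq_sum_sq {R ι κ : Type*} [CommSemiring R] [Fintype ι]
    [Fintype κ] (x : ι → κ → R) (θ : κ → R) (d : ι → R) (m : ℕ) :
    ∑ i, ∑ j, d i * d j * (∑ k, θ k * x i k * x j k) ^ m
      = ∑ α : Fin m → κ, (∏ t, θ (α t)) * (∑ i, d i * ∏ t, x i (α t)) ^ 2 := by
  conv_lhs => simp only [Fintype.sum_pow, mul_sum]
  rw [sum_congr rfl fun i _ => sum_comm, sum_comm]
  refine sum_congr rfl fun α _ => ?_
  rw [sq, sum_mul_sum, mul_sum]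
  refine sum_congr rfl fun i _ => ?_
  rw [mul_sum]
  refine sum_congr rfl fun j _ => ?_
  simp only [prod_mul_distrib]
  ring

theorem hasSum_sum_sum_mul_mul_exp {ι : Type*} [Fintype ι] (B : ι → ι → ℝ) (d : ι → ℝ) :
    HasSum (fun m : ℕ => (∑ i, ∑ j, d i * d j * B i j ^ m) / m.factorial)
      (∑ i, ∑ j, d i * d j * exp (B i j)) := by
  simp only [sum_div, mul_div_assoc]
  refine hasSum_sum fun i _ => hasSum_sum fun j _ => ?_
  rw [exp_eq_exp_ℝ]
  exact (NormedSpace.expSeries_div_hasSum_exp (B i j)).mul_left (d i * d j)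

theorem sum_sum_mul_mul_exp_weightedInner_pos {ι κ : Type*} [Fintype ι] [Fintype κ]
    {x : ι → κ → ℝ} (hx : Function.Injective x) {θ : κ → ℝ} (hθ : ∀ k, 0 < θ k)
    {d : ι → ℝ} (hd : d ≠ 0) :
    0 < ∑ i, ∑ j, d i * d j * exp (∑ k, θ k * x i k * x j k) := by
  have hterm_nonneg (m : ℕ) (α : Fin m → κ) :
      0 ≤ (∏ t, θ (α t)) * (∑ i, d i * ∏ t, x i (α t)) ^ 2 :=
    mul_nonneg (prod_nonneg fun t _ => (hθ _).le) (sq_nonneg _)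
  have hnonneg (m : ℕ) : 0 ≤ (∑ i, ∑ j, d i * d j * (∑ k, θ k * x i k * x j k) ^ m)
      / m.factorial := by
    rw [sum_sum_mul_mul_weightedInner_pow_eq_sum_sq]
    exact div_nonneg (sum_nonneg fun α _ => hterm_nonneg m α) (Nat.cast_nonneg _)
  obtain ⟨m, α, hα⟩ : ∃ (m : ℕ) (α : Fin m → κ), ∑ i, d i * ∏ t, x i (α t) ≠ 0 := by
    by_contra! H
    exact hd (eq_zero_of_forall_sum_mul_prod_eq_zero hx H)
  have hpos : 0 < (∑ i, ∑ j, d i * d j * (∑ k, θ k * x i k * x j k) ^ m) / m.factorial := by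
    rw [sum_sum_mul_mul_weightedInner_pow_eq_sum_sq]
    refine div_pos (sum_pos' (fun α _ => hterm_nonneg m α) ⟨α, mem_univ _, ?_⟩)
      (Nat.cast_pos.mpr m.factorial_pos)
    exact mul_pos (prod_pos fun t _ => hθ _) (sq_pos_of_ne_zero hα)
  exact hasSum_lt hnonneg hpos hasSum_zero (hasSum_sum_sum_mul_mul_exp _ d)

theorem posDef_exp_weightedInner {ι κ : Type*} [Fintype ι] [Fintype κ]
    {x : ι → κ → ℝ} (hx : Function.Injective x) {θ : κ → ℝ} (hθ : ∀ k, 0 < θ k) :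
    (of fun i j => exp (∑ k, θ k * x i k * x j k)).PosDef := by
  refine PosDef.of_dotProduct_mulVec_pos ?_ fun d hd => ?_
  · ext i j
    simp only [conjTranspose_apply, of_apply, star_trivial]
    exact congrArg exp (sum_congr rfl fun k _ => mul_right_comm _ _ _)
  · refine (sum_sum_mul_mul_exp_weightedInner_pos hx hθ hd).trans_eq ?_
    simp only [dotProduct, mulVec, of_apply, star_trivial, mul_sum]
    exact sum_congr rfl fun i _ => sum_congr rfl fun j _ => by ring

theorem gaussian_kernel_posDef_of_distinct {n p : ℕ} (x : Fin n → Fin p → ℝ)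
    (hx : ∀ i j : Fin n, i ≠ j → x i ≠ x j)
    (θ : Fin p → ℝ) (hθ : ∀ k, 0 < θ k) :
    (Matrix.of fun i j : Fin n =>
      Real.exp (-∑ k, θ k * (x i k - x j k) ^ 2)).PosDef := by
  have hinj : Function.Injective x := fun i j h => by_contra fun hij => hx i j hij h
  set D : Matrix (Fin n) (Fin n) ℝ := diagonal fun i => exp (-∑ k, θ k * x i k ^ 2)
  have hD : IsUnit D := isUnit_diagonal.mpr (Pi.isUnit_iff.mpr fun i => (exp_pos _).ne'.isUnit)
  have hfactor : (of fun i j => exp (-∑ k, θ k * (x i k - x j k) ^ 2))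
      = star D * (of fun i j => exp (∑ k, 2 * θ k * x i k * x j k)) * D := by
    ext i j
    simp only [D, star_eq_conjTranspose, diagonal_conjTranspose, star_trivial, diagonal_mul,
      mul_diagonal, of_apply, ← exp_add, ← sum_neg_distrib, ← sum_add_distrib]
    exact congrArg exp (sum_congr rfl fun k _ => by ring)
  rw [hfactor, IsUnit.posDef_star_left_conjugate_iff hD]
  exact posDef_exp_weightedInner hinj fun k => mul_pos two_pos (hθ k)
end

section
/- Under the EzGP covariance function, if two inputs w_1 and w_2 share the same qualitative part (z_1 = z_2) and a third input w_3 has the same quantitative part as w_2 (x_3 = x_2) but satisfies z_{1h} ≠ z_{3h} for every qualitative factor h, then φ(w_1, w_2) ≥ φ(w_1, w_3), with strict inequality if at least one σ_h^2 > 0 for h ∈ {1,...,q}. -/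
theorem ezgp_shared_qualitative_larger_cov {p q : ℕ} {m : Fin q → ℕ}
    (σ0sq : ℝ) (σsq : Fin q → ℝ) (θ0 : Fin p → ℝ)
    (θ : (h : Fin q) → Fin p → Fin (m h) → ℝ)
    (hσ0 : 0 < σ0sq) (hσ : ∀ h, 0 ≤ σsq h)
    (hθ0 : ∀ k, 0 < θ0 k) (hθ : ∀ h k l, 0 < θ h k l)
    (x1 x2 x3 : Fin p → ℝ) (z1 z2 z3 : (h : Fin q) → Fin (m h))
    (hz12 : z1 = z2) (hx32 : x3 = x2) (hz13 : ∀ h, z1 h ≠ z3 h) :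
    ezgpCov σ0sq σsq θ0 θ x1 x3 z1 z3 ≤ ezgpCov σ0sq σsq θ0 θ x1 x2 z1 z2 ∧
    ((∃ h, 0 < σsq h) →
      ezgpCov σ0sq σsq θ0 θ x1 x3 z1 z3 < ezgpCov σ0sq σsq θ0 θ x1 x2 z1 z2) := by
  subst hz12 hx32
  unfold ezgpCov
  have h13 : ∀ h : Fin q, ∑ l, (if z1 h = l ∧ z3 h = l then (1:ℝ) else 0) *
      (σsq h * Real.exp (-∑ k, θ h k l * (x1 k - x3 k) ^ 2)) = 0 := by
    intro h
    apply Finset.sum_eq_zero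
    intro l _
    have hne : ¬ (z1 h = l ∧ z3 h = l) := by
      rintro ⟨h1, h2⟩; exact hz13 h (h1.trans h2.symm)
    simp [hne]
  have h12 : ∀ h : Fin q, ∑ l, (if z1 h = l ∧ z1 h = l then (1:ℝ) else 0) *
      (σsq h * Real.exp (-∑ k, θ h k l * (x1 k - x3 k) ^ 2)) =
      σsq h * Real.exp (-∑ k, θ h k (z1 h) * (x1 k - x3 k) ^ 2) := by
    intro h
    rw [Finset.sum_eq_single (z1 h)]
    · simp
    · intro l _ hl; simp [Ne.symm hl]
    · simp
  simp only [h13, h12, Finset.sum_const_zero, add_zero]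
  have hnn : ∀ h ∈ Finset.univ, (0:ℝ) ≤ σsq h * Real.exp (-∑ k, θ h k (z1 h) * (x1 k - x3 k) ^ 2) :=
    fun h _ => mul_nonneg (hσ h) (Real.exp_pos _).le
  constructor
  · have := Finset.sum_nonneg hnn
    linarith
  · rintro ⟨h0, hpos⟩
    have hp : 0 < ∑ h, σsq h * Real.exp (-∑ k, θ h k (z1 h) * (x1 k - x3 k) ^ 2) :=
      Finset.sum_pos' hnn ⟨h0, Finset.mem_univ h0,
        mul_pos hpos (Real.exp_pos _)⟩
    linarith
end

section
/- Under the multiplicative indicator covariance function φ*, if w_1 and w_2 share the same qualitative part, w_3 has the same quantitative part as w_2 but shares no qualitative level with w_1, and x_1 ≠ x_2, then φ*(w_1, w_2) < φ*(w_1, w_3); i.e., matching qualitative levels strictly decreases the covariance. -/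
/-- The multiplicative indicator covariance function between `(x1, z1)` and `(x2, z2)`. -/
noncomputable def multCov {p q : ℕ} {m : Fin q → ℕ}
    (σsq : ℝ) (θ0 : Fin p → ℝ)
    (θ : (h : Fin q) → Fin p → Fin (m h) → ℝ)
    (x1 x2 : Fin p → ℝ) (z1 z2 : (h : Fin q) → Fin (m h)) : ℝ :=
  σsq * Real.exp (-∑ k, θ0 k * (x1 k - x2 k) ^ 2) *
    ∏ h, ∏ l, (Real.exp (-∑ k, θ h k l * (x1 k - x2 k) ^ 2)) ^
      (if z1 h = l ∧ z2 h = l then (1 : ℕ) else 0)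

theorem mult_cov_counterintuitive {p q : ℕ} {m : Fin q → ℕ}
    (hq : 0 < q)
    (σsq : ℝ) (θ0 : Fin p → ℝ)
    (θ : (h : Fin q) → Fin p → Fin (m h) → ℝ)
    (hσ : 0 < σsq) (hθ0 : ∀ k, 0 < θ0 k) (hθ : ∀ h k l, 0 < θ h k l)
    (x1 x2 x3 : Fin p → ℝ) (z1 z2 z3 : (h : Fin q) → Fin (m h))
    (hz12 : z1 = z2) (hx32 : x3 = x2) (hz13 : ∀ h, z1 h ≠ z3 h)
    (hx12 : x1 ≠ x2) :
    multCov σsq θ0 θ x1 x2 z1 z2 < multCov σsq θ0 θ x1 x3 z1 z3 := by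
  subst hz12 hx32
  obtain ⟨k0, hk0⟩ := Function.ne_iff.1 hx12
  unfold multCov
  have hrhs : (∏ h, ∏ l, (Real.exp (-∑ k, θ h k l * (x1 k - x3 k) ^ 2)) ^
      (if z1 h = l ∧ z3 h = l then (1 : ℕ) else 0)) = 1 := by
    apply Finset.prod_eq_one
    intro h _
    apply Finset.prod_eq_one
    intro l _
    have : ¬(z1 h = l ∧ z3 h = l) := by
      rintro ⟨rfl, h2⟩; exact hz13 h h2.symm
    simp [this]
  rw [hrhs, mul_one]
  have hE : 0 < σsq * Real.exp (-∑ k, θ0 k * (x1 k - x3 k) ^ 2) :=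
    mul_pos hσ (Real.exp_pos _)
  have hlhs : (∏ h, ∏ l, (Real.exp (-∑ k, θ h k l * (x1 k - x3 k) ^ 2)) ^
      (if z1 h = l ∧ z1 h = l then (1 : ℕ) else 0)) < 1 := by
    have key : ∀ (h : Fin q), (∏ l, (Real.exp (-∑ k, θ h k l * (x1 k - x3 k) ^ 2)) ^
        (if z1 h = l ∧ z1 h = l then (1 : ℕ) else 0)) =
        Real.exp (-∑ k, θ h k (z1 h) * (x1 k - x3 k) ^ 2) := by
      intro h
      rw [Finset.prod_eq_single (z1 h)]
      · simp
      · intro l _ hl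
        have : ¬(z1 h = l ∧ z1 h = l) := fun hc => hl hc.1.symm
        simp only [this, if_false, pow_zero]
      · simp
    simp_rw [key]
    have hlt : ∀ h : Fin q, Real.exp (-∑ k, θ h k (z1 h) * (x1 k - x3 k) ^ 2) < 1 := by
      intro h
      rw [Real.exp_lt_one_iff, neg_lt_zero]
      apply Finset.sum_pos' (fun k _ => mul_nonneg (hθ h k _).le (sq_nonneg _))
      exact ⟨k0, Finset.mem_univ _,
        mul_pos (hθ h k0 (z1 h)) (by have := sub_ne_zero.2 hk0; positivity)⟩
    calc ∏ h, Real.exp (-∑ k, θ h k (z1 h) * (x1 k - x3 k) ^ 2)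
        < ∏ _h : Fin q, (1 : ℝ) := by
          apply Finset.prod_lt_prod_of_nonempty
          · intro h _; exact Real.exp_pos _
          · intro h _; exact hlt h
          · exact Finset.univ_nonempty_iff.2 ⟨⟨0, hq⟩⟩
      _ = 1 := Finset.prod_const_one
  calc σsq * Real.exp (-∑ k, θ0 k * (x1 k - x3 k) ^ 2) *
      (∏ h, ∏ l, (Real.exp (-∑ k, θ h k l * (x1 k - x3 k) ^ 2)) ^
        (if z1 h = l ∧ z1 h = l then (1 : ℕ) else 0))
      < σsq * Real.exp (-∑ k, θ0 k * (x1 k - x3 k) ^ 2) * 1 := by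
        exact mul_lt_mul_of_pos_left hlhs hE
    _ = σsq * Real.exp (-∑ k, θ0 k * (x1 k - x3 k) ^ 2) := mul_one _
end
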